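/- arXiv:2304.10017 — 6 statements merged into one kernel-verified Lean document; each statement's English description precedes it below -/
import Mathlib

section
/- For any four points p₀, p₁, p₂, p₃ in Euclidean 3-space, the cube of the total edge length of the tetrahedron they span dominates 1296·√2 times its volume: (∑_{0 ≤ i < j ≤ 3} ‖pᵢ − pⱼ‖)³ ≥ 1296·√2 · vol(convexHull {p₀, p₁, p₂, p₃}), where vol is the Lebesgue measure on ℝ³. Equivalently, the regular tetrahedron, whose Melzak ratio equals 1296√2, minimizes the Melzak ratio among all tetrahedra. -/
/-!
Let `D` be six times the signed volume of the tetrahedron `abcd`. For each of the three pairs of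
opposite edges, say `ab` and `cd`, `2D` is the triple product of `b - a`, `d - c` and the vector
`(c + d) - (a + b)`, which is twice the vector joining the midpoints of the two edges. Hadamard's
inequality bounds `(2D)²` by the product of the three squared lengths. Multiplying the three
bounds, using that the squared doubled midlines add up to the sum `Q` of the squared edges, and
AM-GM, gives `(2D)⁶ ≤ P² (Q / 3)³`, where `P` is the product of the six edges.

By the triangle inequality two opposite edges make up at most half of the total edge length `s`.
Under this constraint `P² Q³ 6¹⁵ ≤ s¹⁸`: after scaling to `s = 6`, take logarithms. Each pair
`a, b` contributes `2 log a + 2 log b + (a² + b²) / 2 ≤ 3 (a + b) - 5`, and `log Q` lies below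
its tangent at `Q = 6`. Equality holds for the regular tetrahedron.

The volume is at most `|D| / 6` because the tetrahedron is an affine image of the standard
simplex. That simplex has volume at most `1 / n!` because its `2ⁿ` reflections in the coordinate
hyperplanes are disjoint up to null sets and lie in the `ℓ¹` unit ball, whose volume is `2ⁿ / n!`.
-/

open MeasureTheory Set Fintype WithLp Real
open scoped ENNReal Nat Matrix Pointwise

theorem volume_setOf_sum_abs_le_one (ι : Type*) [Fintype ι] [Nonempty ι] :
    volume {x : ι → ℝ | ∑ i, |x i| ≤ 1} = 2 ^ card ι / (card ι)! := by
  have h := volume_sum_rpow_le (ι := ι) (le_refl (1 : ℝ)) 1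
  simp only [rpow_one, div_one, ENNReal.ofReal_one, one_pow, one_mul] at h
  rw [h, one_add_one_eq_two, Gamma_two, mul_one, Gamma_nat_eq_factorial,
    ENNReal.ofReal_div_of_pos (by positivity)]
  norm_cast

theorem volume_setOf_pos_sum_le_one_le (ι : Type*) [Fintype ι] [Nonempty ι] :
    volume {x : ι → ℝ | (∀ i, 0 < x i) ∧ ∑ i, x i ≤ 1} ≤ ((card ι)! : ℝ≥0∞)⁻¹ := by
  classical
  set K := {x : ι → ℝ | (∀ i, 0 < x i) ∧ ∑ i, x i ≤ 1}
  have hK : MeasurableSet K := by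
    simp only [K, ofPred_and, ofPred_forall]
    exact (MeasurableSet.iInter fun i =>
      measurableSet_lt measurable_const (measurable_pi_apply i)).inter
      (measurableSet_le (Finset.measurable_sum _ fun i _ => measurable_pi_apply i) measurable_const)
  set reflect : (ι → Bool) → (ι → ℝ) → ι → ℝ := fun ε x i => if ε i then -x i else x i
  have hreflect (ε : ι → Bool) : MeasurePreserving (reflect ε) :=
    volume_preserving_pi (f := fun i (t : ℝ) => if ε i then -t else t) fun i => by
      cases ε i
      · exact MeasurePreserving.id (volume : Measure ℝ)
      · exact Measure.measurePreserving_neg (volume : Measure ℝ)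
  have hdisj : ((Finset.univ : Finset (ι → Bool)) : Set (ι → Bool)).PairwiseDisjoint
      (fun ε => reflect ε ⁻¹' K) := by
    intro ε _ δ _ hεδ
    refine Set.disjoint_left.2 fun x hε hδ => hεδ (funext fun i => ?_)
    have h1 := hε.1 i
    have h2 := hδ.1 i
    cases hε : ε i <;> cases hδ : δ i <;> simp_all [reflect] <;> linarith
  have hcover : (⋃ ε ∈ (Finset.univ : Finset (ι → Bool)), reflect ε ⁻¹' K) ⊆
      {x : ι → ℝ | ∑ i, |x i| ≤ 1} := by
    simp only [Finset.mem_univ, iUnion_true, iUnion_subset_iff]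
    intro ε x hx
    refine le_trans (le_of_eq (Finset.sum_congr rfl fun i _ => ?_)) hx.2
    have := hx.1 i
    cases hε : ε i <;> simp_all [reflect, abs_of_pos, abs_of_neg]
  have key := measure_mono (μ := volume) hcover
  rw [measure_biUnion_finset hdisj fun ε _ => hK.preimage (hreflect ε).measurable,
    volume_setOf_sum_abs_le_one] at key
  simp only [fun ε => (hreflect ε).measure_preimage hK.nullMeasurableSet, Finset.sum_const,
    Finset.card_univ, Fintype.card_fun, Fintype.card_bool, nsmul_eq_mul] at key
  rw [ENNReal.div_eq_inv_mul] at key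
  push_cast at key
  exact (ENNReal.mul_le_mul_iff_right (by positivity) (by simp)).1 (key.trans_eq (mul_comm _ _))

def solidSimplex (ι : Type*) [Fintype ι] : Set (ι → ℝ) := {x | 0 ≤ x ∧ ∑ i, x i ≤ 1}

theorem convex_solidSimplex (ι : Type*) [Fintype ι] : Convex ℝ (solidSimplex ι) :=
  (convex_Ici 0).inter <| convex_halfSpace_le (f := fun x : ι → ℝ => ∑ i, x i)
    ⟨fun _ _ => Finset.sum_add_distrib, fun _ _ => by simp [Finset.mul_sum]⟩ 1

theorem volume_solidSimplex_le (ι : Type*) [Fintype ι] [Nonempty ι] :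
    volume (solidSimplex ι) ≤ ((card ι)! : ℝ≥0∞)⁻¹ := by
  have hsub : solidSimplex ι ⊆
      {x | (∀ i, 0 < x i) ∧ ∑ i, x i ≤ 1} ∪ ⋃ i, {x | x i = 0} := by
    intro x ⟨hx, hsum⟩
    by_cases hpos : ∀ i, 0 < x i
    · exact Or.inl ⟨hpos, hsum⟩
    · push Not at hpos
      obtain ⟨i, hi⟩ := hpos
      exact Or.inr (mem_iUnion.2 ⟨i, le_antisymm hi (hx i)⟩)
  have hnull : volume (⋃ i : ι, {x : ι → ℝ | x i = 0}) = 0 :=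
    measure_iUnion_null fun i =>
      Measure.pi_eval_preimage_null (fun _ : ι => (volume : Measure ℝ)) volume_singleton
  calc volume (solidSimplex ι)
      ≤ volume {x : ι → ℝ | (∀ i, 0 < x i) ∧ ∑ i, x i ≤ 1} +
          volume (⋃ i : ι, {x : ι → ℝ | x i = 0}) :=
        (measure_mono hsub).trans (measure_union_le _ _)
    _ ≤ _ := by rw [hnull, add_zero]; exact volume_setOf_pos_sum_le_one_le ι

theorem volume_convexHull_insert_range_le {ι : Type*} [Fintype ι] [DecidableEq ι] [Nonempty ι]
    (q₀ : ι → ℝ) (q : ι → ι → ℝ) :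
    volume (convexHull ℝ (insert q₀ (range q))) ≤
      ENNReal.ofReal |(Matrix.of fun i j => q i j - q₀ j).det| / (card ι)! := by
  set M : Matrix ι ι ℝ := Matrix.of fun i j => q i j - q₀ j
  set L := Matrix.toLin' Mᵀ
  have hL (i : ι) : L (Pi.single i 1) = q i - q₀ := by
    ext j; simp [L, M]
  have hsub : convexHull ℝ (insert q₀ (range q)) ⊆ q₀ +ᵥ L '' solidSimplex ι := by
    refine convexHull_min ?_ (((convex_solidSimplex ι).linear_image L).vadd q₀)
    rintro _ (rfl | ⟨i, rfl⟩)
    · exact ⟨0, ⟨0, ⟨le_rfl, by simp⟩, map_zero L⟩, by simp⟩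
    · refine ⟨q i - q₀, ⟨Pi.single i 1, ⟨Pi.single_nonneg.2 zero_le_one, by simp⟩, hL i⟩, ?_⟩
      simp [vadd_eq_add]
  calc volume (convexHull ℝ (insert q₀ (range q)))
      ≤ volume (q₀ +ᵥ L '' solidSimplex ι) := measure_mono hsub
    _ = ENNReal.ofReal |M.det| * volume (solidSimplex ι) := by
      rw [measure_vadd, Measure.addHaar_image_linearMap, LinearMap.det_toLin',
        Matrix.det_transpose]
    _ ≤ ENNReal.ofReal |M.det| * ((card ι)! : ℝ≥0∞)⁻¹ := by
      gcongr; exact volume_solidSimplex_le ι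
    _ = ENNReal.ofReal |M.det| / (card ι)! := (div_eq_mul_inv _ _).symm

theorem norm_sub_add_norm_sub_le {E : Type*} [SeminormedAddCommGroup E] (a b c d : E) :
    ‖a - b‖ + ‖c - d‖ ≤ ‖a - c‖ + ‖a - d‖ + ‖b - c‖ + ‖b - d‖ := by
  linarith [norm_sub_le_norm_sub_add_norm_sub a c b, norm_sub_le_norm_sub_add_norm_sub a d b,
    norm_sub_le_norm_sub_add_norm_sub c a d, norm_sub_le_norm_sub_add_norm_sub c b d,
    norm_sub_rev a c, norm_sub_rev b c, norm_sub_rev b d]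

theorem norm_sq_midlines_sum {E : Type*} [NormedAddCommGroup E] [InnerProductSpace ℝ E]
    (a b c d : E) :
    ‖(c + d) - (a + b)‖ ^ 2 + ‖(b + d) - (a + c)‖ ^ 2 + ‖(b + c) - (a + d)‖ ^ 2 =
      ‖a - b‖ ^ 2 + ‖a - c‖ ^ 2 + ‖a - d‖ ^ 2 + ‖b - c‖ ^ 2 + ‖b - d‖ ^ 2 + ‖c - d‖ ^ 2 := by
  simp only [← real_inner_self_eq_norm_sq, inner_add_left, inner_sub_left, inner_add_right,
    inner_sub_right]
  linarith [real_inner_comm a b, real_inner_comm a c, real_inner_comm a d, real_inner_comm b c,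
    real_inner_comm b d, real_inner_comm c d]

theorem sq_dotProduct_cross_le (u v w : Fin 3 → ℝ) :
    (u ⬝ᵥ v ⨯₃ w) ^ 2 ≤ (u ⬝ᵥ u) * (v ⬝ᵥ v) * (w ⬝ᵥ w) := by
  have lagrange (x y : Fin 3 → ℝ) : (x ⬝ᵥ y) ^ 2 ≤ (x ⬝ᵥ x) * (y ⬝ᵥ y) := by
    have h := cross_dot_cross x y x y
    have h0 : 0 ≤ x ⨯₃ y ⬝ᵥ x ⨯₃ y := Finset.sum_nonneg fun i _ => mul_self_nonneg _
    rw [dotProduct_comm y x] at h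
    nlinarith
  have hu : 0 ≤ u ⬝ᵥ u := Finset.sum_nonneg fun i _ => mul_self_nonneg _
  calc (u ⬝ᵥ v ⨯₃ w) ^ 2 ≤ (u ⬝ᵥ u) * (v ⨯₃ w ⬝ᵥ v ⨯₃ w) := lagrange u _
    _ ≤ (u ⬝ᵥ u) * ((v ⬝ᵥ v) * (w ⬝ᵥ w)) := by
      gcongr
      rw [cross_dot_cross, dotProduct_comm w v]
      linarith [mul_self_nonneg (v ⬝ᵥ w)]
    _ = _ := (mul_assoc _ _ _).symm

theorem EuclideanSpace.norm_sq_eq_dotProduct {ι : Type*} [Fintype ι] (x : EuclideanSpace ℝ ι) :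
    ‖x‖ ^ 2 = ofLp x ⬝ᵥ ofLp x := by
  rw [← real_inner_self_eq_norm_sq, EuclideanSpace.inner_eq_star_dotProduct, star_trivial]

def tetraDet (a b c d : EuclideanSpace ℝ (Fin 3)) : ℝ :=
  ofLp (b - a) ⬝ᵥ ofLp (c - a) ⨯₃ ofLp (d - a)

theorem two_mul_tetraDet (a b c d : EuclideanSpace ℝ (Fin 3)) :
    2 * tetraDet a b c d = ofLp (b - a) ⬝ᵥ ofLp ((c + d) - (a + b)) ⨯₃ ofLp (d - c) := by
  simp [tetraDet, cross_apply, dotProduct, Fin.sum_univ_three]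
  ring

theorem sq_two_mul_tetraDet_le (a b c d : EuclideanSpace ℝ (Fin 3)) :
    (2 * tetraDet a b c d) ^ 2 ≤ ‖a - b‖ ^ 2 * ‖c - d‖ ^ 2 * ‖(c + d) - (a + b)‖ ^ 2 := by
  rw [two_mul_tetraDet, norm_sub_rev a b, norm_sub_rev c d]
  simp only [EuclideanSpace.norm_sq_eq_dotProduct]
  linarith [sq_dotProduct_cross_le (ofLp (b - a)) (ofLp ((c + d) - (a + b))) (ofLp (d - c))]

theorem tetraDet_swap (a b c d : EuclideanSpace ℝ (Fin 3)) :
    tetraDet a c b d = -tetraDet a b c d := by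
  rw [tetraDet, tetraDet, triple_product_permutation, ← cross_anticomm, dotProduct_neg]

theorem tetraDet_rotate (a b c d : EuclideanSpace ℝ (Fin 3)) :
    tetraDet a d b c = tetraDet a b c d :=
  triple_product_permutation _ _ _

theorem volume_convexHull_le_abs_tetraDet (a b c d : EuclideanSpace ℝ (Fin 3)) :
    volume (convexHull ℝ {a, b, c, d}) ≤ ENNReal.ofReal (|tetraDet a b c d| / 6) := by
  have hpreimage : toLp 2 ⁻¹' convexHull ℝ {a, b, c, d} =
      convexHull ℝ (insert (ofLp a) (range ![ofLp b, ofLp c, ofLp d])) := by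
    have hofLp : toLp 2 ⁻¹' convexHull ℝ {a, b, c, d} =
        WithLp.linearEquiv 2 ℝ (Fin 3 → ℝ) '' convexHull ℝ {a, b, c, d} :=
      Set.ext fun x => ⟨fun hx => ⟨toLp 2 x, hx, rfl⟩, by rintro ⟨y, hy, rfl⟩; exact hy⟩
    rw [hofLp, ← LinearEquiv.coe_toLinearMap, LinearMap.image_convexHull]
    simp only [image_insert_eq, image_singleton, Matrix.range_cons, Matrix.range_empty,
      union_empty, singleton_union]
    rfl
  have hdet : (Matrix.of fun i j => ![ofLp b, ofLp c, ofLp d] i j - ofLp a j).det =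
      tetraDet a b c d := by
    rw [tetraDet, triple_product_eq_det]
    congr 1
    ext i j
    fin_cases i <;> simp
  have hvol := (EuclideanSpace.volume_preserving_symm_measurableEquiv_toLp (Fin 3)).symm
  rw [← hvol.measure_preimage_equiv, ENNReal.ofReal_div_of_pos (by norm_num)]
  convert volume_convexHull_insert_range_le (ofLp a) ![ofLp b, ofLp c, ofLp d] using 2
  · exact hpreimage
  · rw [hdet]
  · simp [Nat.factorial]

theorem log_le_sub_one_sub_sq_div_four {r : ℝ} (hr : 0 < r) (hr' : r ≤ 3 / 2) :
    log r ≤ (r - 1) - (r - 1) ^ 2 / 4 := by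
  -- `log v ≤ v - 1` at the fourth root `v` of `r` is already sharp enough to second order.
  obtain ⟨v, hv, rfl⟩ : ∃ v, 0 < v ∧ v ^ 4 = r :=
    ⟨r ^ (4⁻¹ : ℝ), by positivity, by rw [← rpow_natCast, ← rpow_mul hr.le]; norm_num⟩
  have hv' : v ≤ 6 / 5 := by
    by_contra! h
    nlinarith [pow_lt_pow_left₀ h (by norm_num) four_ne_zero]
  have hg : 0 ≤ 11 + 6 * v + v ^ 2 - 4 * v ^ 3 - 3 * v ^ 4 - 2 * v ^ 5 - v ^ 6 := by
    nlinarith [pow_pos hv 3, pow_pos hv 4, mul_le_mul_of_nonneg_left hv' (pow_pos hv 4).le,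
      mul_le_mul_of_nonneg_left hv' (pow_pos hv 2).le]
  calc log (v ^ 4) = 4 * log v := by rw [log_pow]; norm_num
    _ ≤ 4 * (v - 1) := by linarith [log_le_sub_one_of_pos hv]
    _ ≤ (v ^ 4 - 1) - (v ^ 4 - 1) ^ 2 / 4 := by nlinarith [mul_nonneg (sq_nonneg (v - 1)) hg]

theorem two_mul_log_sub_le_of_le {t t' : ℝ} (ht : 0 < t) (htt' : t ≤ t') (ht' : t' ≤ 2) :
    2 * log t - t ≤ 2 * log t' - t' := by
  have ht'0 : 0 < t' := ht.trans_le htt'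
  have h := log_le_sub_one_of_pos (div_pos ht ht'0)
  rw [log_div ht.ne' ht'0.ne', div_sub_one ht'0.ne', le_div_iff₀ ht'0] at h
  nlinarith

theorem two_mul_log_sub_le (t : ℝ) (ht : 0 < t) : 2 * log t - t ≤ 2 * log 2 - 2 := by
  have h := log_le_sub_one_of_pos (half_pos ht)
  rw [log_div ht.ne' two_ne_zero] at h
  linarith

theorem two_mul_log_add_two_mul_log_le {a b : ℝ} (ha : 0 < a) (hb : 0 < b) (hab : a + b ≤ 3) :
    2 * log a + 2 * log b + (a ^ 2 + b ^ 2) / 2 ≤ 3 * (a + b) - 5 := by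
  -- For fixed `a + b` the left side is `2 log t - t` plus a constant, where `t = ab`;
  -- this increases up to `t = 2`.
  have hab' : 0 < a * b := mul_pos ha hb
  have hprod : a * b ≤ ((a + b) / 2) ^ 2 := by nlinarith [sq_nonneg (a - b)]
  rw [← mul_add, ← log_mul ha.ne' hb.ne',
    show (a ^ 2 + b ^ 2) / 2 = 2 * ((a + b) / 2) ^ 2 - a * b by ring]
  rcases le_or_gt (((a + b) / 2) ^ 2) 2 with hsmall | hlarge
  · have hmono := two_mul_log_sub_le_of_le hab' hprod hsmall
    have hquad := log_le_sub_one_sub_sq_div_four (by positivity : 0 < (a + b) / 2) (by linarith)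
    rw [log_pow] at hmono
    push_cast at hmono
    nlinarith
  · have h2 := two_mul_log_sub_le (a * b) hab'
    have hlog2 := log_two_lt_d9
    nlinarith

theorem sq_prod_mul_pow_le_of_sum_eq_six (x y : Fin 3 → ℝ) (hx : ∀ i, 0 < x i)
    (hy : ∀ i, 0 < y i) (hpair : ∀ i, x i + y i ≤ 3) (hsum : ∑ i, (x i + y i) = 6) :
    (∏ i, (x i * y i)) ^ 2 * (∑ i, (x i ^ 2 + y i ^ 2)) ^ 3 ≤ 216 := by
  set Q := ∑ i, (x i ^ 2 + y i ^ 2)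
  have hQ : 0 < Q := Finset.sum_pos (fun i _ => by have := hx i; positivity) Finset.univ_nonempty
  have hP : 0 < ∏ i, (x i * y i) := Finset.prod_pos fun i _ => mul_pos (hx i) (hy i)
  have hpairs : ∑ i, (2 * log (x i) + 2 * log (y i) + (x i ^ 2 + y i ^ 2) / 2) ≤ 3 := by
    calc _ ≤ ∑ i, (3 * (x i + y i) - 5) :=
          Finset.sum_le_sum fun i _ => two_mul_log_add_two_mul_log_le (hx i) (hy i) (hpair i)
      _ = 3 := by rw [Finset.sum_sub_distrib, ← Finset.mul_sum, hsum]; simp; norm_num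
  have hsplit : ∑ i, (2 * log (x i) + 2 * log (y i) + (x i ^ 2 + y i ^ 2) / 2) =
      2 * ∑ i, (log (x i) + log (y i)) + Q / 2 := by
    simp only [Q, Finset.mul_sum, Finset.sum_div, ← Finset.sum_add_distrib]
    exact Finset.sum_congr rfl fun i _ => by ring
  have htangent : log Q ≤ log 6 + Q / 6 - 1 := by
    have h := log_le_sub_one_of_pos (show 0 < Q / 6 by positivity)
    rw [log_div hQ.ne' (by norm_num)] at h
    linarith
  have hlogP : log (∏ i, (x i * y i)) = ∑ i, (log (x i) + log (y i)) := by
    rw [log_prod fun i _ => (mul_pos (hx i) (hy i)).ne']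
    exact Finset.sum_congr rfl fun i _ => log_mul (hx i).ne' (hy i).ne'
  rw [← log_le_log_iff (by positivity) (by norm_num), log_mul (by positivity) (by positivity),
    log_pow, log_pow, hlogP, show (216 : ℝ) = 6 ^ 3 by norm_num, log_pow]
  push_cast
  linarith

theorem sq_prod_mul_pow_le (x y : Fin 3 → ℝ) (hx : ∀ i, 0 ≤ x i) (hy : ∀ i, 0 ≤ y i)
    (hpair : ∀ i, 2 * (x i + y i) ≤ ∑ j, (x j + y j)) :
    (∏ i, (x i * y i)) ^ 2 * (∑ i, (x i ^ 2 + y i ^ 2)) ^ 3 * 6 ^ 15 ≤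
      (∑ i, (x i + y i)) ^ 18 := by
  set s := ∑ i, (x i + y i)
  have hs : 0 ≤ s := Finset.sum_nonneg fun i _ => add_nonneg (hx i) (hy i)
  by_cases hpos : ∀ i, 0 < x i ∧ 0 < y i
  swap
  · push Not at hpos
    obtain ⟨i, hi⟩ := hpos
    have hzero : ∏ i, (x i * y i) = 0 := Finset.prod_eq_zero (Finset.mem_univ i) (by
      rcases le_or_gt (x i) 0 with h | h
      · rw [le_antisymm h (hx i), zero_mul]
      · rw [le_antisymm (hi h) (hy i), mul_zero])
    rw [hzero, zero_pow two_ne_zero, zero_mul, zero_mul]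
    positivity
  have hs' : 0 < s :=
    Finset.sum_pos (fun i _ => add_pos (hpos i).1 (hpos i).2) Finset.univ_nonempty
  set c := 6 / s
  have hc : 0 < c := by positivity
  have hcs : c * s = 6 := div_mul_cancel₀ _ hs'.ne'
  have key := sq_prod_mul_pow_le_of_sum_eq_six (fun i => c * x i) (fun i => c * y i)
    (fun i => mul_pos hc (hpos i).1) (fun i => mul_pos hc (hpos i).2)
    (fun i => by nlinarith [hpair i])
    (by simp only [← mul_add, ← Finset.mul_sum]; exact hcs)
  have hprod : ∏ i, (c * x i * (c * y i)) = c ^ 6 * ∏ i, (x i * y i) := by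
    simp only [Fin.prod_univ_three]; ring
  have hsq : ∑ i, ((c * x i) ^ 2 + (c * y i) ^ 2) = c ^ 2 * ∑ i, (x i ^ 2 + y i ^ 2) := by
    simp only [Fin.sum_univ_three]; ring
  have hscale : (c ^ 6 * ∏ i, (x i * y i)) ^ 2 * (c ^ 2 * ∑ i, (x i ^ 2 + y i ^ 2)) ^ 3 =
      (∏ i, (x i * y i)) ^ 2 * (∑ i, (x i ^ 2 + y i ^ 2)) ^ 3 * 6 ^ 15 * (6 ^ 3 / s ^ 18) := by
    simp only [c]; field_simp
  rw [hprod, hsq, hscale, mul_div_assoc', div_le_iff₀ (by positivity)] at key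
  nlinarith

theorem prod_le_sum_div_card_pow {ι : Type*} [Fintype ι] [Nonempty ι] {z : ι → ℝ}
    (hz : ∀ i, 0 ≤ z i) : ∏ i, z i ≤ ((∑ i, z i) / card ι) ^ card ι := by
  have h := geom_mean_le_arith_mean Finset.univ (fun _ => 1) z (fun _ _ => zero_le_one)
    (by simp [Fintype.card_pos]) fun i _ => hz i
  simp only [rpow_one, Finset.sum_const, Finset.card_univ, nsmul_eq_mul, mul_one,
    one_mul] at h
  have hP : 0 ≤ ∏ i, z i := Finset.prod_nonneg fun i _ => hz i
  calc ∏ i, z i = ((∏ i, z i) ^ ((card ι : ℝ)⁻¹)) ^ card ι := by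
        rw [← rpow_natCast, ← rpow_mul hP, inv_mul_cancel₀ (by positivity), rpow_one]
    _ ≤ _ := pow_le_pow_left₀ (by positivity) h _

theorem mul_abs_le_of_opposite_edges (x y m : Fin 3 → ℝ) (D : ℝ) (hx : ∀ i, 0 ≤ x i)
    (hy : ∀ i, 0 ≤ y i) (hpair : ∀ i, 2 * (x i + y i) ≤ ∑ j, (x j + y j))
    (hm : ∀ i, 0 ≤ m i) (hmsum : ∑ i, m i = ∑ i, (x i ^ 2 + y i ^ 2))
    (hD : ∀ i, (2 * D) ^ 2 ≤ x i ^ 2 * y i ^ 2 * m i) :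
    216 * √2 * |D| ≤ (∑ i, (x i + y i)) ^ 3 := by
  set s := ∑ i, (x i + y i)
  have hs : 0 ≤ s := Finset.sum_nonneg fun i _ => add_nonneg (hx i) (hy i)
  have hamgm := prod_le_sum_div_card_pow hm
  simp only [Fintype.card_fin, Nat.cast_ofNat, hmsum] at hamgm
  have hD6 : (2 * D) ^ 6 ≤ (∏ i, (x i * y i)) ^ 2 * ((∑ i, (x i ^ 2 + y i ^ 2)) / 3) ^ 3 :=
    calc (2 * D) ^ 6 = ∏ _i : Fin 3, (2 * D) ^ 2 := by simp only [Fin.prod_univ_three]; ring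
      _ ≤ ∏ i, (x i ^ 2 * y i ^ 2 * m i) :=
        Finset.prod_le_prod (fun _ _ => sq_nonneg _) fun i _ => hD i
      _ = (∏ i, (x i * y i)) ^ 2 * ∏ i, m i := by simp only [Fin.prod_univ_three]; ring
      _ ≤ _ := mul_le_mul_of_nonneg_left hamgm (sq_nonneg _)
  have hsix := sq_prod_mul_pow_le x y hx hy hpair
  have hsqrt : √2 ^ 6 = 8 := by
    rw [show √2 ^ 6 = (√2 ^ 2) ^ 3 by ring, sq_sqrt zero_le_two]; norm_num
  refine (pow_le_pow_iff_left₀ (by positivity) (by positivity) (show 6 ≠ 0 by norm_num)).1 ?_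
  calc (216 * √2 * |D|) ^ 6 = 6 ^ 18 / 8 * (2 * D) ^ 6 := by
        rw [mul_pow, mul_pow, hsqrt, pow_abs, abs_of_nonneg (by positivity)]; ring
    _ ≤ (s ^ 3) ^ 6 := by nlinarith

theorem mul_abs_tetraDet_le (a b c d : EuclideanSpace ℝ (Fin 3)) :
    216 * √2 * |tetraDet a b c d| ≤
      (‖a - b‖ + ‖a - c‖ + ‖a - d‖ + ‖b - c‖ + ‖b - d‖ + ‖c - d‖) ^ 3 := by
  have key := mul_abs_le_of_opposite_edges
    ![‖a - b‖, ‖a - c‖, ‖a - d‖] ![‖c - d‖, ‖b - d‖, ‖b - c‖]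
    ![‖(c + d) - (a + b)‖ ^ 2, ‖(b + d) - (a + c)‖ ^ 2, ‖(b + c) - (a + d)‖ ^ 2]
    (tetraDet a b c d)
  simp only [Fin.forall_fin_succ, Fin.sum_univ_three, Matrix.cons_val_zero, Matrix.cons_val_one,
    Matrix.cons_val_two, Matrix.cons_val_succ, Matrix.head_cons, Matrix.tail_cons,
    Matrix.cons_val_fin_one, IsEmpty.forall_iff, and_true] at key
  refine (key ⟨norm_nonneg _, norm_nonneg _, norm_nonneg _⟩
    ⟨norm_nonneg _, norm_nonneg _, norm_nonneg _⟩ ⟨?_, ?_, ?_⟩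
    ⟨sq_nonneg _, sq_nonneg _, sq_nonneg _⟩ ?_
    ⟨sq_two_mul_tetraDet_le a b c d, ?_, ?_⟩).trans_eq (by ring)
  · linarith [norm_sub_add_norm_sub_le a b c d]
  · linarith [norm_sub_add_norm_sub_le a c b d, norm_sub_rev b c]
  · linarith [norm_sub_add_norm_sub_le a d b c, norm_sub_rev b d, norm_sub_rev c d]
  · linarith [norm_sq_midlines_sum a b c d]
  · rw [← neg_sq, ← mul_neg, ← tetraDet_swap]
    exact sq_two_mul_tetraDet_le a c b d
  · rw [← tetraDet_rotate]
    exact sq_two_mul_tetraDet_le a d b c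

/-- The regular tetrahedron minimizes the Melzak ratio among tetrahedra:
for any four points in Euclidean 3-space, the cube of the total edge length
of the tetrahedron they span is at least `1296 √2` times its volume. -/
theorem melzak_tetrahedron (p : Fin 4 → EuclideanSpace ℝ (Fin 3)) :
    (‖p 0 - p 1‖ + ‖p 0 - p 2‖ + ‖p 0 - p 3‖ +
     ‖p 1 - p 2‖ + ‖p 1 - p 3‖ + ‖p 2 - p 3‖) ^ 3 ≥
    1296 * Real.sqrt 2 *
      (MeasureTheory.volume
        (convexHull ℝ ({p 0, p 1, p 2, p 3} : Set (EuclideanSpace ℝ (Fin 3))))).toReal := by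
  have hvol := ENNReal.toReal_le_of_le_ofReal (by positivity)
    (volume_convexHull_le_abs_tetraDet (p 0) (p 1) (p 2) (p 3))
  have hedges := mul_abs_tetraDet_le (p 0) (p 1) (p 2) (p 3)
  have hsqrt : 0 ≤ √2 := sqrt_nonneg 2
  nlinarith
end

section
/- For any three points p, q, r in the Euclidean plane and any real h > 0, the right prism of height h over the triangle pqr satisfies (2(‖p−q‖ + ‖q−r‖ + ‖r−p‖) + 3h)³ ≥ 972·√3 · A·h, where A is the two-dimensional Lebesgue measure of convexHull {p, q, r}. Equivalently, every triangular right prism has Melzak ratio at least 972√3 = (2^{2/3}·3^{11/6})³, the value attained by the conjectured minimizer. -/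
/-!
A prism of height `h` over a triangle of perimeter `P` and area `A` has edge length `2P + 3h` and
volume `A h`. Heron's formula and AM–GM give the isoperimetric inequality for triangles
`12 √3 A ≤ P²`, and AM–GM for `P, P, 3h` gives `81 P² h ≤ (2P + 3h)³`.

For the triangle `0, u, v` in an oriented plane, `2A ≤ |ω u v|`: the triangle and its point
reflection through the midpoint of `[u, v]` lie in the parallelogram spanned by `u` and `v` and
overlap in a null set.
-/

open MeasureTheory Module Pointwise

theorem twenty_seven_mul_mul_mul_le_add_add_pow_three {x y z : ℝ} (hx : 0 ≤ x) (hy : 0 ≤ y)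
    (hz : 0 ≤ z) : 27 * (x * y * z) ≤ (x + y + z) ^ 3 := by
  nlinarith [mul_nonneg hx hy, mul_nonneg hy hz, mul_nonneg hx hz,
    mul_nonneg hx (sq_nonneg (y - z)), mul_nonneg hy (sq_nonneg (x - z)),
    mul_nonneg hz (sq_nonneg (x - y))]

theorem twenty_seven_mul_heron_le_pow_four {a b c : ℝ} (ha : a ≤ b + c) (hb : b ≤ a + c)
    (hc : c ≤ a + b) :
    27 * ((a + b + c) * (-a + b + c) * (a - b + c) * (a + b - c)) ≤ (a + b + c) ^ 4 := by
  have hamgm := twenty_seven_mul_mul_mul_le_add_add_pow_three (x := -a + b + c) (y := a - b + c)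
    (z := a + b - c) (by linarith) (by linarith) (by linarith)
  calc 27 * ((a + b + c) * (-a + b + c) * (a - b + c) * (a + b - c))
      = (a + b + c) * (27 * ((-a + b + c) * (a - b + c) * (a + b - c))) := by ring
    _ ≤ (a + b + c) * ((-a + b + c) + (a - b + c) + (a + b - c)) ^ 3 := by
      gcongr; linarith
    _ = (a + b + c) ^ 4 := by ring

section Triangle

variable {E : Type*} [AddCommGroup E] [Module ℝ E]

theorem exists_smul_add_smul_of_mem_convexHull_zero_pair {u v x : E}
    (hx : x ∈ convexHull ℝ {0, u, v}) :
    ∃ s t : ℝ, 0 ≤ s ∧ 0 ≤ t ∧ s + t ≤ 1 ∧ s • u + t • v = x := by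
  rw [convexHull_insert ⟨u, by simp⟩, mem_convexJoin] at hx
  obtain ⟨y, hy, z, hz, hxz⟩ := hx
  rw [Set.mem_singleton_iff] at hy
  subst hy
  rw [convexHull_pair, segment_eq_image] at hz
  obtain ⟨a, ha, rfl⟩ := hz
  rw [segment_eq_image] at hxz
  obtain ⟨t, ht, rfl⟩ := hxz
  refine ⟨t * (1 - a), t * a, mul_nonneg ht.1 (by linarith [ha.2]), mul_nonneg ht.1 ha.1, ?_, ?_⟩
  · nlinarith [ht.2]
  · simp [smul_add, smul_smul]

theorem smul_add_smul_mem_parallelepiped_pair {u v : E} {s t : ℝ} (hs : s ∈ Set.Icc 0 1)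
    (ht : t ∈ Set.Icc 0 1) : s • u + t • v ∈ parallelepiped ![u, v] := by
  rw [mem_parallelepiped_iff]
  refine ⟨![s, t], ⟨fun i ↦ ?_, fun i ↦ ?_⟩, by simp [Fin.sum_univ_two]⟩ <;>
    fin_cases i <;> simp [hs.1, hs.2, ht.1, ht.2]

theorem convexHull_zero_pair_subset_parallelepiped (u v : E) :
    convexHull ℝ {0, u, v} ⊆ parallelepiped ![u, v] := by
  intro x hx
  obtain ⟨s, t, hs, ht, hst, rfl⟩ := exists_smul_add_smul_of_mem_convexHull_zero_pair hx
  exact smul_add_smul_mem_parallelepiped_pair ⟨hs, by linarith⟩ ⟨ht, by linarith⟩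

theorem preimage_sub_convexHull_zero_pair_subset_parallelepiped (u v : E) :
    (u + v - ·) ⁻¹' convexHull ℝ {0, u, v} ⊆ parallelepiped ![u, v] := by
  intro x hx
  obtain ⟨s, t, hs, ht, hst, hx⟩ := exists_smul_add_smul_of_mem_convexHull_zero_pair hx
  have : x = (1 - s) • u + (1 - t) • v := by
    linear_combination (norm := module) hx
  rw [this]
  exact smul_add_smul_mem_parallelepiped_pair ⟨by linarith, by linarith⟩ ⟨by linarith, by linarith⟩

end Triangle

section Haar

variable {E : Type*} [NormedAddCommGroup E] [NormedSpace ℝ E] [MeasurableSpace E] [BorelSpace E]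
  [FiniteDimensional ℝ E] (μ : Measure E) [μ.IsAddHaarMeasure]

theorem addHaar_segment (hE : 1 < finrank ℝ E) (u v : E) : μ (segment ℝ u v) = 0 := by
  refine measure_mono_null ?_ (Measure.addHaar_affineSubspace μ (line[ℝ, u, v]) fun htop ↦ ?_)
  · rw [← convexHull_pair]
    exact convexHull_subset_affineSpan _
  · have hdir := congrArg AffineSubspace.direction htop
    rw [AffineSubspace.direction_top, direction_affineSpan, vectorSpan_pair] at hdir
    have hle : finrank ℝ (ℝ ∙ (u -ᵥ v)) ≤ 1 := by
      simpa using finrank_span_le_card (R := ℝ) ({u -ᵥ v} : Set E)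
    rw [hdir, finrank_top] at hle
    omega

theorem addHaar_convexHull_zero_pair_inter_preimage_sub (hE : 1 < finrank ℝ E) (u v : E) :
    μ (convexHull ℝ {0, u, v} ∩ (u + v - ·) ⁻¹' convexHull ℝ {0, u, v}) = 0 := by
  by_cases hli : LinearIndependent ℝ ![u, v]
  · refine measure_mono_null ?_ (addHaar_segment μ hE u v)
    rintro x ⟨hxT, hxW⟩
    obtain ⟨s, t, hs, ht, hst, rfl⟩ := exists_smul_add_smul_of_mem_convexHull_zero_pair hxT
    obtain ⟨s', t', hs', ht', hst', hx⟩ := exists_smul_add_smul_of_mem_convexHull_zero_pair hxW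
    obtain ⟨hss', htt'⟩ := LinearIndependent.pair_iff.mp hli (s + s' - 1) (t + t' - 1)
      (by linear_combination (norm := module) hx)
    exact ⟨s, t, hs, ht, by linarith, rfl⟩
  · set S := Submodule.span ℝ (Set.range ![u, v])
    have hS : S ≠ ⊤ := by
      intro htop
      have hle : Set.finrank ℝ (Set.range ![u, v]) ≤ 2 := finrank_range_le_card _
      have hE' : Set.finrank ℝ (Set.range ![u, v]) = finrank ℝ E := by
        change finrank ℝ S = _
        rw [htop, finrank_top]
      rw [linearIndependent_iff_card_eq_finrank_span, Fintype.card_fin] at hli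
      omega
    refine measure_mono_null (Set.inter_subset_left.trans ?_) (Measure.addHaar_submodule μ S hS)
    refine convexHull_min ?_ S.convex
    rintro _ (rfl | rfl | rfl)
    · exact S.zero_mem
    · exact Submodule.subset_span ⟨0, rfl⟩
    · exact Submodule.subset_span ⟨1, rfl⟩

theorem two_mul_addHaar_convexHull_zero_pair_le (hE : 1 < finrank ℝ E) (u v : E) :
    2 * μ (convexHull ℝ {0, u, v}) ≤ μ (parallelepiped ![u, v]) := by
  set T := convexHull ℝ {0, u, v}
  have hT : MeasurableSet T := ((Set.toFinite _).isClosed_convexHull ℝ).measurableSet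
  have hW : μ ((u + v - ·) ⁻¹' T) = μ T :=
    (μ.measurePreserving_sub_left (u + v)).measure_preimage hT.nullMeasurableSet
  calc 2 * μ T = μ T + μ ((u + v - ·) ⁻¹' T) := by rw [hW, two_mul]
    _ = μ (T ∪ (u + v - ·) ⁻¹' T) + μ (T ∩ (u + v - ·) ⁻¹' T) :=
      (measure_union_add_inter T (hT.preimage (measurable_const.sub measurable_id))).symm
    _ ≤ μ (parallelepiped ![u, v]) := by
      rw [addHaar_convexHull_zero_pair_inter_preimage_sub μ hE, add_zero]
      exact measure_mono (Set.union_subset (convexHull_zero_pair_subset_parallelepiped u v)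
        (preimage_sub_convexHull_zero_pair_subset_parallelepiped u v))

end Haar

section Plane

variable {E : Type*} [NormedAddCommGroup E] [InnerProductSpace ℝ E] [Fact (finrank ℝ E = 2)]

attribute [local instance] FiniteDimensional.of_fact_finrank_eq_two

namespace Orientation

variable (o : Orientation ℝ E (Fin 2))

theorem four_mul_areaForm_sq (u v : E) :
    4 * o.areaForm u v ^ 2 = (‖u‖ + ‖u - v‖ + ‖v‖) * (-‖u‖ + ‖u - v‖ + ‖v‖) *
      (‖u‖ - ‖u - v‖ + ‖v‖) * (‖u‖ + ‖u - v‖ - ‖v‖) := by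
  linear_combination 4 * o.inner_sq_add_areaForm_sq u v
    - (‖u‖ ^ 2 + ‖v‖ ^ 2 - ‖u - v‖ ^ 2 + 2 * inner ℝ u v) * norm_sub_sq_real u v

theorem six_mul_sqrt_three_mul_abs_areaForm_le (u v : E) :
    6 * √3 * |o.areaForm u v| ≤ (‖u‖ + ‖u - v‖ + ‖v‖) ^ 2 := by
  have hsub : ‖u - v‖ ≤ ‖u‖ + ‖v‖ := norm_sub_le u v
  have hu : ‖u‖ ≤ ‖u - v‖ + ‖v‖ := norm_le_norm_sub_add u v
  have hv : ‖v‖ ≤ ‖u‖ + ‖u - v‖ := by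
    linarith [norm_le_norm_sub_add v u, norm_sub_rev v u]
  have h108 : (6 * √3 * |o.areaForm u v|) ^ 2 ≤ ((‖u‖ + ‖u - v‖ + ‖v‖) ^ 2) ^ 2 := by
    have := twenty_seven_mul_heron_le_pow_four hu hsub hv
    rw [← o.four_mul_areaForm_sq] at this
    nlinarith [Real.sq_sqrt (show (0 : ℝ) ≤ 3 by norm_num), sq_abs (o.areaForm u v)]
  exact (pow_le_pow_iff_left₀ (by positivity) (by positivity) two_ne_zero).mp h108

variable [MeasurableSpace E] [BorelSpace E]

theorem volume_parallelepiped_pair (u v : E) :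
    volume (parallelepiped ![u, v]) = ENNReal.ofReal |o.areaForm u v| := by
  rw [← o.measure_eq_volume, AlternatingMap.measure_parallelepiped, o.areaForm_to_volumeForm]

theorem two_mul_volume_convexHull_zero_pair_le (u v : E) :
    2 * volume (convexHull ℝ {0, u, v}) ≤ ENNReal.ofReal |o.areaForm u v| := by
  rw [← o.volume_parallelepiped_pair]
  exact two_mul_addHaar_convexHull_zero_pair_le volume
    ((Fact.out : finrank ℝ E = 2) ▸ one_lt_two) u v

end Orientation

variable [MeasurableSpace E] [BorelSpace E]

theorem twelve_mul_sqrt_three_mul_volume_convexHull_le (p q r : E) :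
    12 * √3 * (volume (convexHull ℝ {p, q, r})).toReal ≤ (‖p - q‖ + ‖q - r‖ + ‖r - p‖) ^ 2 := by
  let o : Orientation ℝ E (Fin 2) := (finBasisOfFinrankEq ℝ E Fact.out).orientation
  have htranslate : convexHull ℝ {p, q, r} = p +ᵥ convexHull ℝ {0, q - p, r - p} := by
    simp [← convexHull_vadd, Set.vadd_set_insert]
  have harea : 2 * (volume (convexHull ℝ {p, q, r})).toReal ≤ |o.areaForm (q - p) (r - p)| := by
    have := o.two_mul_volume_convexHull_zero_pair_le (q - p) (r - p)
    rw [htranslate, measure_vadd]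
    simpa using ENNReal.toReal_le_of_le_ofReal (abs_nonneg _) this
  have hperim := o.six_mul_sqrt_three_mul_abs_areaForm_le (q - p) (r - p)
  rw [norm_sub_rev q p, sub_sub_sub_cancel_right] at hperim
  nlinarith [Real.sqrt_nonneg 3]

end Plane

/-- Every triangular right prism has Melzak ratio at least `972 √3`:
for a right prism of height `h > 0` over the triangle `p q r`, the cube of its
total edge length `2(‖p−q‖+‖q−r‖+‖r−p‖) + 3h` is at least `972 √3` times its
volume `A·h`, where `A` is the planar Lebesgue measure of `convexHull {p,q,r}`. -/
theorem melzak_triangular_prism (p q r : EuclideanSpace ℝ (Fin 2)) (h : ℝ) (hh : 0 < h) :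
    (2 * (‖p - q‖ + ‖q - r‖ + ‖r - p‖) + 3 * h) ^ 3 ≥
    972 * Real.sqrt 3 *
      ((MeasureTheory.volume
        (convexHull ℝ ({p, q, r} : Set (EuclideanSpace ℝ (Fin 2))))).toReal * h) := by
  have : Fact (finrank ℝ (EuclideanSpace ℝ (Fin 2)) = 2) := ⟨finrank_euclideanSpace_fin⟩
  set P := ‖p - q‖ + ‖q - r‖ + ‖r - p‖
  set A := (volume (convexHull ℝ ({p, q, r} : Set (EuclideanSpace ℝ (Fin 2))))).toReal
  have hisoperimetric : 12 * √3 * A ≤ P ^ 2 :=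
    twelve_mul_sqrt_three_mul_volume_convexHull_le p q r
  have hamgm := twenty_seven_mul_mul_mul_le_add_add_pow_three (x := P) (y := P) (z := 3 * h)
    (by positivity) (by positivity) (by positivity)
  calc 972 * √3 * (A * h) = 81 * (12 * √3 * A) * h := by ring
    _ ≤ 81 * P ^ 2 * h := by gcongr
    _ = 27 * (P * P * (3 * h)) := by ring
    _ ≤ (P + P + 3 * h) ^ 3 := hamgm
    _ = (2 * P + 3 * h) ^ 3 := by ring
end

section
/- Let B > 0, let α ∈ (0, π), and let w₁, w₂, w₃ > 0 satisfy w₁·w₂·w₃ ≥ 2, w₃ ≤ 2·w₂·tan(α/2), and w₁ + w₂ ≤ B. Then B³·tan(α/2) ≥ 27/4; consequently α ≥ 2·arctan(27/(4B³)). -/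
/-!
Volume and wedge condition together give `w₁ w₂² tan(α/2) ≥ 1`, while AM-GM applied to
`w₁, w₂/2, w₂/2` gives `27 w₁ w₂² ≤ 4 (w₁ + w₂)³ ≤ 4 B³`. Multiplying yields the bound on
`B³ tan(α/2)`, and the angle bound follows by applying `arctan` to `tan(α/2) ≥ 27/(4B³)`.
-/

open Real

theorem mul_sq_le_add_pow_three {a b : ℝ} (ha : 0 ≤ a) (hb : 0 ≤ b) :
    27 * (a * b ^ 2) ≤ 4 * (a + b) ^ 3 := by
  -- `4 (a + b)³ - 27 a b² = (a + 4b) (b - 2a)²`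
  nlinarith [mul_nonneg (by positivity : 0 ≤ a + 4 * b) (sq_nonneg (b - 2 * a))]

theorem two_mul_arctan_le_of_le_tan_half {α c : ℝ} (hα₀ : -π < α) (hαπ : α < π)
    (hc : c ≤ tan (α / 2)) : 2 * arctan c ≤ α := by
  have h := arctan_le_arctan_iff.2 hc
  rw [arctan_tan (by linarith) (by linarith)] at h
  linarith

theorem melzak_dihedral_bound_general (B α w₁ w₂ w₃ : ℝ)
    (hα₀ : 0 < α) (hαπ : α < Real.pi)
    (hw₁ : 0 < w₁) (hw₂ : 0 < w₂)
    (hvol : w₁ * w₂ * w₃ ≥ 2)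
    (hwedge : w₃ ≤ 2 * w₂ * Real.tan (α / 2))
    (hedge : w₁ + w₂ ≤ B) :
    B ^ 3 * Real.tan (α / 2) ≥ 27 / 4 ∧ α ≥ 2 * Real.arctan (27 / (4 * B ^ 3)) := by
  have hB : 0 < B := by linarith
  have hshape : 1 ≤ w₁ * w₂ ^ 2 * tan (α / 2) := by nlinarith [mul_pos hw₁ hw₂]
  have hamgm : 27 * (w₁ * w₂ ^ 2) ≤ 4 * B ^ 3 :=
    (mul_sq_le_add_pow_three hw₁.le hw₂.le).trans (by gcongr)
  have hbound : 27 / 4 ≤ B ^ 3 * tan (α / 2) := by nlinarith [mul_pos hw₁ (pow_pos hw₂ 2)]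
  refine ⟨hbound, two_mul_arctan_le_of_le_tan_half (by linarith [pi_pos]) hαπ ?_⟩
  rw [div_le_iff₀ (by positivity)]
  linarith

/-- Algebraic core of the dihedral angle bound: if `w₁w₂w₃ ≥ 2`,
`w₃ ≤ 2w₂·tan(α/2)` and `w₁ + w₂ ≤ B`, then `B³·tan(α/2) ≥ 27/4` and
consequently `α ≥ 2·arctan(27/(4B³))`. -/
theorem melzak_dihedral_bound (B α w₁ w₂ w₃ : ℝ) (hB : 0 < B)
    (hα₀ : 0 < α) (hαπ : α < Real.pi)
    (hw₁ : 0 < w₁) (hw₂ : 0 < w₂) (hw₃ : 0 < w₃)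
    (hvol : w₁ * w₂ * w₃ ≥ 2)
    (hwedge : w₃ ≤ 2 * w₂ * Real.tan (α / 2))
    (hedge : w₁ + w₂ ≤ B) :
    B ^ 3 * Real.tan (α / 2) ≥ 27 / 4 ∧ α ≥ 2 * Real.arctan (27 / (4 * B ^ 3)) :=
  melzak_dihedral_bound_general B α w₁ w₂ w₃ hα₀ hαπ hw₁ hw₂ hvol hwedge hedge
end

section
/- Let B > 0, d ≥ 0, let α ∈ (0, π), and let w₁, w₂, w₃ > 0 and w₂′ ≥ 0 satisfy w₁·w₂·w₃ ≥ 1, w₃ ≤ 2·(w₂ + w₂′)·tan(α/2), w₂′ ≤ d/(2·tan(α/2)), and w₁ + w₂ ≤ B. Then (4/27)·B³·tan(α/2) ≥ 1/2 − (1/4)·d·B². In particular, if d·B² < 2 then tan(α/2) ≥ 27·(2 − d·B²)/(16·B³), a positive lower bound depending only on B and d. -/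
/-! Since `w₃ ≤ 2(w₂ + w₂')·tan(α/2)` and `2·tan(α/2)·w₂' ≤ d`, the volume condition gives
`1 ≤ w₁w₂w₃ ≤ 2·tan(α/2)·w₁w₂² + d·w₁w₂`. Under `w₁ + w₂ ≤ B`, AM-GM bounds `w₁w₂²` by `4B³/27`
and `w₁w₂` by `B²/4`. -/

lemma mul_sq_le_of_add_le {x y B : ℝ} (hx : 0 ≤ x) (hy : 0 ≤ y) (h : x + y ≤ B) :
    x * y ^ 2 ≤ 4 / 27 * B ^ 3 :=
  calc x * y ^ 2 ≤ 4 / 27 * (x + y) ^ 3 := by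
        -- `4(x + y)³ - 27xy² = (y - 2x)²(x + 4y)`
        nlinarith [mul_nonneg (sq_nonneg (y - 2 * x)) (by positivity : 0 ≤ x + 4 * y)]
    _ ≤ 4 / 27 * B ^ 3 := by gcongr

lemma mul_le_of_add_le {x y B : ℝ} (hx : 0 ≤ x) (hy : 0 ≤ y) (h : x + y ≤ B) :
    x * y ≤ B ^ 2 / 4 :=
  calc x * y ≤ (x + y) ^ 2 / 4 := by linarith [four_mul_le_sq_add x y]
    _ ≤ B ^ 2 / 4 := by gcongr

lemma one_le_wedge_bound {t d w₁ w₂ w₃ w₂' : ℝ} (ht : 0 < t) (hw₁₂ : 0 ≤ w₁ * w₂)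
    (hvol : 1 ≤ w₁ * w₂ * w₃) (hwedge : w₃ ≤ 2 * (w₂ + w₂') * t) (hdist : w₂' ≤ d / (2 * t)) :
    1 ≤ 2 * t * (w₁ * w₂ ^ 2) + d * (w₁ * w₂) := by
  rw [le_div_iff₀' (by positivity)] at hdist
  calc 1 ≤ w₁ * w₂ * w₃ := hvol
    _ ≤ w₁ * w₂ * (2 * (w₂ + w₂') * t) := mul_le_mul_of_nonneg_left hwedge hw₁₂
    _ = 2 * t * (w₁ * w₂ ^ 2) + 2 * t * w₂' * (w₁ * w₂) := by ring
    _ ≤ 2 * t * (w₁ * w₂ ^ 2) + d * (w₁ * w₂) := by gcongr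

theorem melzak_generalized_dihedral_bound_general (B d α w₁ w₂ w₃ w₂' : ℝ)
    (hB : 0 < B) (hd : 0 ≤ d)
    (hα₀ : 0 < α) (hαπ : α < Real.pi)
    (hw₁ : 0 < w₁) (hw₂ : 0 < w₂)
    (hvol : w₁ * w₂ * w₃ ≥ 1)
    (hwedge : w₃ ≤ 2 * (w₂ + w₂') * Real.tan (α / 2))
    (hdist : w₂' ≤ d / (2 * Real.tan (α / 2)))
    (hedge : w₁ + w₂ ≤ B) :
    4 / 27 * B ^ 3 * Real.tan (α / 2) ≥ 1 / 2 - 1 / 4 * d * B ^ 2 ∧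
    (d * B ^ 2 < 2 → Real.tan (α / 2) ≥ 27 * (2 - d * B ^ 2) / (16 * B ^ 3)) := by
  set t := Real.tan (α / 2)
  have ht : 0 < t := Real.tan_pos_of_pos_of_lt_pi_div_two (by linarith) (by linarith)
  have hkey := one_le_wedge_bound ht (by positivity) hvol hwedge hdist
  have hcubic := mul_le_mul_of_nonneg_left (mul_sq_le_of_add_le hw₁.le hw₂.le hedge)
    (by positivity : 0 ≤ 2 * t)
  have hquad := mul_le_mul_of_nonneg_left (mul_le_of_add_le hw₁.le hw₂.le hedge) hd
  have hmain : 4 / 27 * B ^ 3 * t ≥ 1 / 2 - 1 / 4 * d * B ^ 2 := by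
    linarith [mul_nonneg hd (sq_nonneg B)]
  refine ⟨hmain, fun _ => ?_⟩
  rw [ge_iff_le, div_le_iff₀ (by positivity)]
  linarith

/-- Algebraic core of the generalized dihedral angle bound: if `w₁w₂w₃ ≥ 1`,
`w₃ ≤ 2(w₂ + w₂')·tan(α/2)`, `w₂' ≤ d/(2·tan(α/2))` and `w₁ + w₂ ≤ B`, then
`(4/27)·B³·tan(α/2) ≥ 1/2 − (1/4)·d·B²`; in particular if `d·B² < 2` then
`tan(α/2) ≥ 27(2 − dB²)/(16B³)`. -/
theorem melzak_generalized_dihedral_bound (B d α w₁ w₂ w₃ w₂' : ℝ)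
    (hB : 0 < B) (hd : 0 ≤ d)
    (hα₀ : 0 < α) (hαπ : α < Real.pi)
    (hw₁ : 0 < w₁) (hw₂ : 0 < w₂) (hw₃ : 0 < w₃) (hw₂' : 0 ≤ w₂')
    (hvol : w₁ * w₂ * w₃ ≥ 1)
    (hwedge : w₃ ≤ 2 * (w₂ + w₂') * Real.tan (α / 2))
    (hdist : w₂' ≤ d / (2 * Real.tan (α / 2)))
    (hedge : w₁ + w₂ ≤ B) :
    4 / 27 * B ^ 3 * Real.tan (α / 2) ≥ 1 / 2 - 1 / 4 * d * B ^ 2 ∧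
    (d * B ^ 2 < 2 → Real.tan (α / 2) ≥ 27 * (2 - d * B ^ 2) / (16 * B ^ 3)) :=
  melzak_generalized_dihedral_bound_general B d α w₁ w₂ w₃ w₂' hB hd hα₀ hαπ hw₁ hw₂ hvol hwedge
    hdist hedge
end

section
/- Let γ₁, …, γ₆ be six real numbers, each in the interval [0, π/2]. If cos γ₁ + cos γ₂ + ⋯ + cos γ₆ < 3, then γ₁ + γ₂ + ⋯ + γ₆ > 3π/2. Equivalently, if γ₁ + ⋯ + γ₆ ≤ 3π/2 then cos γ₁ + ⋯ + cos γ₆ ≥ 3. -/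
/-! Jordan's inequality `cos x ≥ 1 - 2x/π` on `[0, π/2]`, summed over the six angles, gives
`∑ cos γᵢ ≥ 6 - (2/π) ∑ γᵢ`; with `∑ cos γᵢ < 3` this forces `∑ γᵢ > 3π/2`. -/

open Finset Real

theorem Real.card_sub_mul_sum_le_sum_cos {ι : Type*} (s : Finset ι) {γ : ι → ℝ}
    (hγ : ∀ i ∈ s, γ i ∈ Set.Icc 0 (π / 2)) :
    #s - 2 / π * ∑ i ∈ s, γ i ≤ ∑ i ∈ s, cos (γ i) := by
  calc (#s : ℝ) - 2 / π * ∑ i ∈ s, γ i = ∑ i ∈ s, (1 - 2 / π * γ i) := by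
        rw [sum_sub_distrib, ← mul_sum, sum_const, nsmul_one]
    _ ≤ ∑ i ∈ s, cos (γ i) :=
        sum_le_sum fun i hi => one_sub_mul_le_cos (hγ i hi).1 (hγ i hi).2

open Finset in
/-- Angle-deficit step for an exposed triangular face: if six angles
`γ i ∈ [0, π/2]` satisfy `∑ cos (γ i) < 3`, then `∑ γ i > 3π/2`. -/
theorem melzak_triangle_angle_deficit (γ : Fin 6 → ℝ)
    (hγ : ∀ i, γ i ∈ Set.Icc 0 (Real.pi / 2))
    (hcos : ∑ i, Real.cos (γ i) < 3) :
    ∑ i, γ i > 3 * Real.pi / 2 := by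
  have hjordan := card_sub_mul_sum_le_sum_cos univ fun i _ => hγ i
  rw [card_univ, Fintype.card_fin] at hjordan
  have h3 : 3 < 2 / π * ∑ i, γ i := by push_cast at hjordan; linarith
  rw [div_mul_eq_mul_div, lt_div_iff₀ pi_pos] at h3
  linarith
end

section
/- Fix c ∈ (0, 1). The function x ↦ cos x / √(1 − c²·sin² x) is strictly decreasing on [0, π/2]: for all 0 ≤ x < y ≤ π/2, cos y / √(1 − c²·sin² y) < cos x / √(1 − c²·sin² x). Consequently, for θ ∈ (0, π/2) and 0 ≤ α < β with β − α ≤ π and α ≤ π, the difference cos(θ)·cos((β−α)/2)/(2·√(1 − cos²θ·sin²((β−α)/2))) − cos(θ)·cos(α/2)/(2·√(1 − cos²θ·sin²(α/2))) is negative whenever α < β/2. -/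
/-!
Writing `s = sin² x`, the square of `cos x / √(1 - c² sin² x)` is `(1 - s) / (1 - c² s)`, a Möbius
function of `s` which decreases on `[0, 1]` because `c² < 1`. Since `sin²` increases on `[0, π/2]`
and `cos ≥ 0` there, the function itself decreases. The difference in the second claim is
`(cos θ / 2) · (f ((β - α) / 2) - f (α / 2))` for this function `f` with `c = cos θ`, and
`α < β / 2` says exactly `α / 2 < (β - α) / 2`.
-/

open Real Set

lemma strictAntiOn_one_sub_div_one_sub_mul {c : ℝ} (hc : c ^ 2 < 1) :
    StrictAntiOn (fun s : ℝ => (1 - s) / (1 - c ^ 2 * s)) (Icc 0 1) := by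
  intro s ⟨hs₀, hs₁⟩ t ⟨_, ht₁⟩ hst
  have hds : 0 < 1 - c ^ 2 * s := by nlinarith [sq_nonneg c]
  have hdt : 0 < 1 - c ^ 2 * t := by nlinarith [sq_nonneg c]
  rw [div_lt_div_iff₀ hdt hds]
  nlinarith [mul_pos (sub_pos.2 hc) (sub_pos.2 hst)]

lemma cos_div_sqrt_one_sub_mul_sin_sq {x : ℝ} (hx : x ∈ Icc (-(π / 2)) (π / 2)) (c : ℝ) :
    cos x / √(1 - c ^ 2 * sin x ^ 2) = √((1 - sin x ^ 2) / (1 - c ^ 2 * sin x ^ 2)) := by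
  rw [sqrt_div (by nlinarith [sin_sq_le_one x]), ← cos_sq', sqrt_sq (cos_nonneg_of_mem_Icc hx)]

lemma strictMonoOn_sin_sq : StrictMonoOn (fun x : ℝ => sin x ^ 2) (Icc 0 (π / 2)) := by
  intro x ⟨hx₀, hx₁⟩ y ⟨hy₀, hy₁⟩ hxy
  have hsin := strictMonoOn_sin ⟨by linarith [pi_pos], hx₁⟩ ⟨by linarith [pi_pos], hy₁⟩ hxy
  exact pow_lt_pow_left₀ hsin (sin_nonneg_of_nonneg_of_le_pi hx₀ (by linarith [pi_pos])) two_ne_zero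

lemma strictAntiOn_cos_div_sqrt_one_sub_mul_sin_sq {c : ℝ} (hc : c ^ 2 < 1) :
    StrictAntiOn (fun x => cos x / √(1 - c ^ 2 * sin x ^ 2)) (Icc 0 (π / 2)) := by
  have hIcc : Icc 0 (π / 2) ⊆ Icc (-(π / 2)) (π / 2) :=
    Icc_subset_Icc_left (by linarith [pi_pos])
  intro x hx y hy hxy
  simp only [cos_div_sqrt_one_sub_mul_sin_sq (hIcc hx), cos_div_sqrt_one_sub_mul_sin_sq (hIcc hy)]
  have hsin_sq_mem (z : ℝ) : sin z ^ 2 ∈ Icc 0 1 := ⟨sq_nonneg _, sin_sq_le_one z⟩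
  refine sqrt_lt_sqrt ?_ <| strictAntiOn_one_sub_div_one_sub_mul hc
    (hsin_sq_mem x) (hsin_sq_mem y) (strictMonoOn_sin_sq hx hy hxy)
  have : c ^ 2 * sin y ^ 2 ≤ 1 := by nlinarith [sin_sq_le_one y, sq_nonneg c]
  exact div_nonneg (sub_nonneg.2 (sin_sq_le_one y)) (sub_nonneg.2 this)

lemma cos_sq_lt_one_of_mem_Ioo {θ : ℝ} (hθ : θ ∈ Ioo 0 π) : cos θ ^ 2 < 1 := by
  nlinarith [sin_pos_of_mem_Ioo hθ, sin_sq_add_cos_sq θ]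

/-- For fixed `c ∈ (0,1)`, the function `x ↦ cos x / √(1 − c²·sin² x)` is strictly
decreasing on `[0, π/2]`; consequently the derivative of the spherical area expression,
`cos θ·cos((β−α)/2)/(2√(1 − cos²θ·sin²((β−α)/2))) − cos θ·cos(α/2)/(2√(1 − cos²θ·sin²(α/2)))`,
is negative whenever `α < β/2` (with `θ ∈ (0, π/2)`, `0 ≤ α < β`, `β − α ≤ π`, `α ≤ π`). -/
theorem melzak_bigon_derivative (c : ℝ) (hc₀ : 0 < c) (hc₁ : c < 1) :
    (∀ x y : ℝ, 0 ≤ x → x < y → y ≤ Real.pi / 2 →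
      Real.cos y / Real.sqrt (1 - c ^ 2 * Real.sin y ^ 2) <
        Real.cos x / Real.sqrt (1 - c ^ 2 * Real.sin x ^ 2)) ∧
    (∀ θ α β : ℝ, 0 < θ → θ < Real.pi / 2 → 0 ≤ α → α < β → β - α ≤ Real.pi →
      α ≤ Real.pi → α < β / 2 →
      Real.cos θ * Real.cos ((β - α) / 2) /
          (2 * Real.sqrt (1 - Real.cos θ ^ 2 * Real.sin ((β - α) / 2) ^ 2)) -
        Real.cos θ * Real.cos (α / 2) /
          (2 * Real.sqrt (1 - Real.cos θ ^ 2 * Real.sin (α / 2) ^ 2)) < 0) := by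
  refine ⟨fun x y hx hxy hy =>
    strictAntiOn_cos_div_sqrt_one_sub_mul_sin_sq (by nlinarith) ⟨hx, hxy.le.trans hy⟩
      ⟨hx.trans hxy.le, hy⟩ hxy, ?_⟩
  intro θ α β hθ₀ hθ hα₀ hαβ hβα _ hhalf
  have hcos_sq : cos θ ^ 2 < 1 := cos_sq_lt_one_of_mem_Ioo ⟨hθ₀, by linarith [pi_pos]⟩
  have hcos : 0 < cos θ := cos_pos_of_mem_Ioo ⟨by linarith [pi_pos], hθ⟩
  have hdecr : cos ((β - α) / 2) / √(1 - cos θ ^ 2 * sin ((β - α) / 2) ^ 2) <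
      cos (α / 2) / √(1 - cos θ ^ 2 * sin (α / 2) ^ 2) :=
    strictAntiOn_cos_div_sqrt_one_sub_mul_sin_sq hcos_sq ⟨by linarith, by linarith⟩
      ⟨by linarith, by linarith⟩ (by linarith)
  simp only [mul_div_mul_comm, ← mul_sub]
  exact mul_neg_of_pos_of_neg (by positivity) (sub_neg.2 hdecr)
end
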